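/- arXiv:2602.07593 — 4 statements merged into one kernel-verified Lean document; each statement's English description precedes it below -/
import Mathlib

section
/- Let P_1, ..., P_n (n ≥ 2) be strict linear orders on a finite set 𝒜 such that the swap distance between any two of them is at most 1. Then there exists a single pair of elements {A, A'} such that for every i, either P_i = P_1 or P_i is obtained from P_1 by swapping A and A' (which are adjacent in P_1). -/
variable {α : Type*}

/-- Swap distance: number of ordered pairs `(a,b)` with `a ≻_P b` and `b ≻_Q a`.
For strict linear orders this counts each disagreeing unordered pair exactly once. -/
noncomputable def swapDist (P Q : α → α → Prop) : ℕ :=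
  Set.ncard {p : α × α | P p.1 p.2 ∧ Q p.2 p.1}

/-- `a` and `b` are adjacent in `P` (with `a` just above `b`): `P a b` and nothing in between. -/
def Adjacent (P : α → α → Prop) (a b : α) : Prop :=
  P a b ∧ ¬ ∃ c, P a c ∧ P c b

/-- `Q` is obtained from `P` by swapping the adjacent pair `{a, b}`:
`Q` reverses the pair and agrees with `P` on every other pair. -/
def SwapOf (P Q : α → α → Prop) (a b : α) : Prop :=
  Adjacent P a b ∧ Q b a ∧
    ∀ x y, ({x, y} : Set α) ≠ {a, b} → (Q x y ↔ P x y)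

/-- Number of voters preferring `x` to `y`. -/
noncomputable def majCount {n : ℕ} (P : Fin n → α → α → Prop) (x y : α) : ℕ :=
  Set.ncard {i | P i x y}

/-- Strict pairwise majority relation. -/
def StrictMaj {n : ℕ} (P : Fin n → α → α → Prop) (x y : α) : Prop :=
  majCount P y x < majCount P x y

/-- Weak pairwise majority relation. -/
def WeakMaj {n : ℕ} (P : Fin n → α → α → Prop) (x y : α) : Prop :=
  majCount P y x ≤ majCount P x y

/-- `P` is single-peaked with respect to the axis `L`: there is a peak `b`
(the `P`-maximum) such that whenever `a` lies between `c` and the peak along `L`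
(weakly on the peak side), `a ≻_P c`. -/
def SinglePeaked (L P : α → α → Prop) : Prop :=
  ∃ b : α, (∀ a, a ≠ b → P b a) ∧
    ∀ a c : α, ((L b a ∨ b = a) ∧ L a c) ∨ (L c a ∧ (L a b ∨ a = b)) → P a c

/-! Two strict total orders at swap distance 1 differ by transposing one pair, which is then
necessarily adjacent. Two such transpositions of `P 0` on different pairs disagree on
both pairs, so they are at distance at least 2; hence all orders other than `P 0` transpose
the same pair. -/

section SwapDistance

variable {P Q R : α → α → Prop}

theorem iff_of_not_disagree [IsStrictTotalOrder α P] [IsStrictTotalOrder α Q] {x y : α}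
    (hxy : ¬ (P x y ∧ Q y x)) (hyx : ¬ (P y x ∧ Q x y)) : Q x y ↔ P x y := by
  constructor
  · intro hq
    rcases trichotomous_of P x y with h | rfl | h
    · exact h
    · exact absurd hq (irrefl x)
    · exact absurd ⟨h, hq⟩ hyx
  · intro hp
    rcases trichotomous_of Q x y with h | rfl | h
    · exact h
    · exact absurd hp (irrefl x)
    · exact absurd ⟨hp, h⟩ hxy

theorem adjacent_of_reverse_of_agree [IsStrictOrder α P] [IsStrictOrder α Q] {a b : α}
    (hab : P a b) (hba : Q b a)
    (hagree : ∀ x y, ({x, y} : Set α) ≠ {a, b} → (Q x y ↔ P x y)) : Adjacent P a b := by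
  refine ⟨hab, fun ⟨c, hac, hcb⟩ => ?_⟩
  have hac' : a ≠ c := ne_of_irrefl hac
  have hcb' : c ≠ b := ne_of_irrefl hcb
  have hab' : a ≠ b := ne_of_irrefl hab
  have hQac : Q a c := (hagree a c (by simp [Set.pair_eq_pair_iff, hcb', hab'])).mpr hac
  have hQcb : Q c b := (hagree c b (by simp [Set.pair_eq_pair_iff, hac'.symm, hcb'])).mpr hcb
  exact asymm (_root_.trans hQac hQcb) hba

theorem iff_of_swapDist_eq_zero [Finite α] [IsStrictTotalOrder α P] [IsStrictTotalOrder α Q]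
    (h : swapDist P Q = 0) (x y : α) : Q x y ↔ P x y := by
  have hempty : ∀ p : α × α, ¬ (P p.1 p.2 ∧ Q p.2 p.1) := by
    simpa [Set.eq_empty_iff_forall_notMem] using (Set.ncard_eq_zero (Set.toFinite _)).mp h
  exact iff_of_not_disagree (hempty (x, y)) (hempty (y, x))

theorem exists_swapOf_of_swapDist_eq_one [IsStrictTotalOrder α P] [IsStrictTotalOrder α Q]
    (h : swapDist P Q = 1) : ∃ a b, SwapOf P Q a b := by
  obtain ⟨⟨a, b⟩, hab⟩ := Set.ncard_eq_one.mp h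
  have hdis : ∀ x y, P x y ∧ Q y x ↔ x = a ∧ y = b := fun x y => by
    simpa using Set.ext_iff.mp hab (x, y)
  obtain ⟨hPab, hQba⟩ := (hdis a b).mpr ⟨rfl, rfl⟩
  have hagree : ∀ x y, ({x, y} : Set α) ≠ {a, b} → (Q x y ↔ P x y) := fun x y hxy =>
    iff_of_not_disagree (fun h => hxy (by simp [(hdis x y).mp h]))
      (fun h => hxy (by simp [(hdis y x).mp h, Set.pair_comm]))
  exact ⟨a, b, adjacent_of_reverse_of_agree hPab hQba hagree, hQba, hagree⟩

theorem eq_or_exists_swapOf_of_swapDist_le_one [Finite α] [IsStrictTotalOrder α P]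
    [IsStrictTotalOrder α Q] (h : swapDist P Q ≤ 1) :
    (∀ x y, Q x y ↔ P x y) ∨ ∃ a b, SwapOf P Q a b := by
  rcases Nat.le_one_iff_eq_zero_or_eq_one.mp h with h0 | h1
  · exact .inl (iff_of_swapDist_eq_zero h0)
  · exact .inr (exists_swapOf_of_swapDist_eq_one h1)

theorem two_le_swapDist_of_swapOf_of_swapOf [Finite α] {a b c d : α}
    (hQ : SwapOf P Q a b) (hR : SwapOf P R c d) (hne : ({a, b} : Set α) ≠ {c, d}) :
    2 ≤ swapDist Q R := by
  have hRab : R a b := (hR.2.2 a b hne).mpr hQ.1.1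
  have hQcd : Q c d := (hQ.2.2 c d hne.symm).mpr hR.1.1
  have hsub : ({(b, a), (c, d)} : Set (α × α)) ⊆ {p | Q p.1 p.2 ∧ R p.2 p.1} := by
    rintro p (rfl | rfl)
    exacts [⟨hQ.2.1, hRab⟩, ⟨hQcd, hR.2.1⟩]
  have hpair : ((b, a) : α × α) ≠ (c, d) := fun h => hne (by simp_all [Set.pair_comm])
  calc 2 = ({(b, a), (c, d)} : Set (α × α)).ncard := (Set.ncard_pair hpair).symm
    _ ≤ swapDist Q R := Set.ncard_le_ncard hsub (Set.toFinite _)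

theorem SwapOf.of_pair_eq [IsStrictOrder α P] {a b c d : α} (h : SwapOf P Q c d) (hab : P a b)
    (heq : ({c, d} : Set α) = {a, b}) : SwapOf P Q a b := by
  rcases Set.pair_eq_pair_iff.mp heq with ⟨rfl, rfl⟩ | ⟨rfl, rfl⟩
  · exact h
  · exact absurd h.1.1 (asymm hab)

end SwapDistance

/-- In a profile with pairwise swap distance at most 1, there is a single pair
`{A, A'}` such that every order equals `P 1` or is obtained from `P 1` by
swapping that (adjacent) pair. -/
theorem stmt2 [Fintype α] [Nonempty α] {n : ℕ} (hn : 2 ≤ n)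
    (P : Fin n → α → α → Prop) (hP : ∀ i, IsStrictTotalOrder α (P i))
    (hd : ∀ i j, swapDist (P i) (P j) ≤ 1) :
    ∃ A A' : α, ∀ i,
      (∀ x y, P i x y ↔ P (⟨0, by omega⟩ : Fin n) x y) ∨
        SwapOf (P (⟨0, by omega⟩ : Fin n)) (P i) A A' := by
  set i₀ : Fin n := ⟨0, by omega⟩
  by_cases hall : ∀ i x y, P i x y ↔ P i₀ x y
  · obtain ⟨a⟩ := ‹Nonempty α›
    exact ⟨a, a, fun i => .inl (hall i)⟩
  obtain ⟨j, hj⟩ := not_forall.mp hall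
  obtain ⟨a, b, hab⟩ := (eq_or_exists_swapOf_of_swapDist_le_one (hd i₀ j)).resolve_left hj
  refine ⟨a, b, fun i => (eq_or_exists_swapOf_of_swapDist_le_one (hd i₀ i)).imp_right ?_⟩
  rintro ⟨c, d, hcd⟩
  refine hcd.of_pair_eq hab.1.1 (not_not.mp fun hne => ?_)
  have := two_le_swapDist_of_swapOf_of_swapOf hab hcd (Ne.symm hne)
  have := hd j i
  omega
end

section
/- Let P_1, ..., P_n be strict linear orders on a finite set 𝒜 with pairwise swap distance at most 1. Define the weak majority relation by A ≽_M A' iff |{i : A ≻_{P_i} A'}| ≥ |{i : A' ≻_{P_i} A}|. Then ≽_M is complete and transitive on 𝒜. -/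
variable {α : Type*}

/-!
Two voters whose swap distance is at most one disagree on at most one ordered pair, and an
exchange argument among four voters upgrades this to: in the whole profile at most one unordered
pair `{a, b}` is contested. Now let voters `i` and `j` rank `x ≻ y` and `y ≻ z`; such voters exist
once `x ≽_M y ≽_M z`. If `{x, z}` is contested, then `{x, y}` and `{y, z}` are unanimous, so every
voter ranks `x ≻ y ≻ z`. If `{x, z}` is not contested but unanimously `z ≻ x`, then `i` ranks
`z ≻ x ≻ y` and `j` ranks `y ≻ z ≻ x`, so `{x, y}` and `{y, z}` are both contested. Either way
`x ≻ z` is unanimous, and in particular `x ≽_M z`.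
-/

lemma rel_or_rel_of_ne {r : α → α → Prop} [Std.Trichotomous r] {a b : α} (h : a ≠ b) :
    r a b ∨ r b a :=
  (trichotomous_of r a b).imp_right fun h' => h'.resolve_left h

lemma eq_of_swapDist_le_one [Finite α] {P Q : α → α → Prop} {a b c d : α}
    (h : swapDist P Q ≤ 1) (hab : P a b) (hba : Q b a) (hcd : P c d) (hdc : Q d c) :
    (a, b) = (c, d) := by
  by_contra hne
  have : 1 < swapDist P Q :=
    (Set.one_lt_ncard_iff (Set.toFinite _)).2 ⟨(a, b), (c, d), ⟨hab, hba⟩, ⟨hcd, hdc⟩, hne⟩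
  omega

def Contested {n : ℕ} (P : Fin n → α → α → Prop) (a b : α) : Prop :=
  ∃ i j, P i a b ∧ P j b a

section Profile

variable {n : ℕ} {P : Fin n → α → α → Prop} [∀ i, IsStrictTotalOrder α (P i)] {a b c d : α}

lemma rel_of_not_contested (h : ¬ Contested P a b) {m : Fin n} (hm : P m a b) (k : Fin n) :
    P k a b :=
  (rel_or_rel_of_ne (ne_of_irrefl hm)).resolve_right fun hk => h ⟨m, k, hm, hk⟩

lemma exists_rel_of_weakMaj [Nonempty (Fin n)] (hab : a ≠ b) (h : WeakMaj P a b) :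
    ∃ i, P i a b := by
  by_contra! hnone
  have hab0 : majCount P a b = 0 := by simp [majCount, hnone]
  have hba : {i | P i b a} = ∅ :=
    (Set.ncard_eq_zero (Set.toFinite _)).1 (Nat.le_zero.1 (hab0 ▸ h))
  obtain ⟨k⟩ := ‹Nonempty (Fin n)›
  exact Set.eq_empty_iff_forall_notMem.1 hba k ((rel_or_rel_of_ne hab).resolve_left (hnone k))

variable [Finite α]

lemma Contested.sym2_eq (hd : ∀ i j, swapDist (P i) (P j) ≤ 1) (hab : Contested P a b)
    (hcd : Contested P c d) : s(a, b) = s(c, d) := by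
  obtain ⟨i, j, hi, hj⟩ := hab
  obtain ⟨k, l, hk, hl⟩ := hcd
  wlog hic : P i c d generalizing c d k l
  · rw [Sym2.eq_swap (a := c)]
    exact this l k hl hk ((rel_or_rel_of_ne (ne_of_irrefl hk)).resolve_left hic)
  refine (Sym2.mk_eq_mk_iff (p := (a, b)) (q := (c, d))).2 ?_
  rcases rel_or_rel_of_ne (r := P l) (ne_of_irrefl hi) with hla | hlb
  · rcases rel_or_rel_of_ne (r := P j) (ne_of_irrefl hk) with hjc | hjd
    · exact .inr (eq_of_swapDist_le_one (hd l j) hla hj hl hjc)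
    · exact .inl (eq_of_swapDist_le_one (hd i j) hi hj hic hjd)
  · exact .inl (eq_of_swapDist_le_one (hd i l) hi hlb hic hl)

lemma rel_of_rel_of_rel (hd : ∀ i j, swapDist (P i) (P j) ≤ 1) {x y z : α} (hxz : x ≠ z)
    {i j : Fin n} (hi : P i x y) (hj : P j y z) (k : Fin n) : P k x z := by
  by_cases hc : Contested P x z
  · have hxy : ¬ Contested P x y := fun h =>
      ne_of_irrefl hj (Sym2.congr_right.1 (h.sym2_eq hd hc))
    have hyz : ¬ Contested P y z := fun h =>
      ne_of_irrefl hi (Sym2.congr_left.1 (h.sym2_eq hd hc)).symm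
    exact trans_of _ (rel_of_not_contested hxy hi k) (rel_of_not_contested hyz hj k)
  · suffices ∃ m, P m x z from
      let ⟨_, hm⟩ := this; rel_of_not_contested hc hm k
    by_contra! hnone
    have hzx (m : Fin n) : P m z x := (rel_or_rel_of_ne hxz).resolve_left (hnone m)
    have hxy : Contested P x y := ⟨i, j, hi, trans_of _ hj (hzx j)⟩
    have hzy : Contested P z y := ⟨i, j, trans_of _ (hzx i) hi, hj⟩
    exact hxz (Sym2.congr_left.1 (hxy.sym2_eq hd hzy))

lemma weakMaj_trans (hd : ∀ i j, swapDist (P i) (P j) ≤ 1) {x y z : α} (hxy : WeakMaj P x y)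
    (hyz : WeakMaj P y z) : WeakMaj P x z := by
  rcases eq_or_ne x y with rfl | hxy'
  · exact hyz
  rcases eq_or_ne y z with rfl | hyz'
  · exact hxy
  rcases eq_or_ne x z with rfl | hxz
  · exact le_rfl
  suffices majCount P z x = 0 from this.le.trans (Nat.zero_le _)
  refine (Set.ncard_eq_zero (Set.toFinite _)).2 (Set.eq_empty_of_forall_notMem fun k hk => ?_)
  have : Nonempty (Fin n) := ⟨k⟩
  obtain ⟨i, hi⟩ := exists_rel_of_weakMaj hxy' hxy
  obtain ⟨j, hj⟩ := exists_rel_of_weakMaj hyz' hyz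
  exact asymm_of _ (rel_of_rel_of_rel hd hxz hi hj k) hk

end Profile

theorem stmt3_general [Fintype α] {n : ℕ}
    (P : Fin n → α → α → Prop) (hP : ∀ i, IsStrictTotalOrder α (P i))
    (hd : ∀ i j, swapDist (P i) (P j) ≤ 1) :
    (∀ x y : α, WeakMaj P x y ∨ WeakMaj P y x) ∧ Transitive (WeakMaj P) :=
  ⟨fun _ _ => le_total _ _, fun _ _ _ => weakMaj_trans hd⟩

/-- For a profile of strict linear orders with pairwise swap distance at most 1,
the weak majority relation is complete and transitive. -/
theorem stmt3 [Fintype α] (hcard : 3 ≤ Fintype.card α) {n : ℕ}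
    (P : Fin n → α → α → Prop) (hP : ∀ i, IsStrictTotalOrder α (P i))
    (hd : ∀ i j, swapDist (P i) (P j) ≤ 1) :
    (∀ x y : α, WeakMaj P x y ∨ WeakMaj P y x) ∧ Transitive (WeakMaj P) :=
  stmt3_general P hP hd
end

section
/- Let L be a strict linear order (axis) on a finite set 𝒜 and let P_1,...,P_n be strict linear orders on 𝒜 each single-peaked with respect to L. Then for any three alternatives x, y, z, the strict majority relation restricted to {x,y,z} contains no 3-cycle: it is not the case that x ≻_M y, y ≻_M z, and z ≻_M x. -/
variable {α : Type*}

/-!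
Among three alternatives, the one in the middle of the axis is never ranked last by a
single-peaked voter: the peak lies on its side of one of the other two. A majority cycle through
the middle alternative `b`, entering it from `a` and leaving it towards `c`, is then impossible by
counting: every voter with `a ≻ b` has `a ≻ c`, and every voter with `c ≻ a` has `b ≻ a`.
-/

def LiesBetween (L : α → α → Prop) (u m w : α) : Prop :=
  (L u m ∧ L m w) ∨ (L w m ∧ L m u)

theorem liesBetween_cases (L : α → α → Prop) [IsStrictTotalOrder α L] {x y z : α}
    (hxy : x ≠ y) (hyz : y ≠ z) (hzx : z ≠ x) :
    LiesBetween L x y z ∨ LiesBetween L y z x ∨ LiesBetween L z x y := by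
  have htrans : ∀ {a b c}, L a b → L b c → L a c := trans_of L
  have hirrefl : ∀ a, ¬ L a a := irrefl_of L
  rcases trichotomous_of L x y with h₁ | h₁ | h₁ <;> rcases trichotomous_of L y z with h₂ | h₂ | h₂ <;>
    rcases trichotomous_of L z x with h₃ | h₃ | h₃ <;> grind [LiesBetween]

theorem SinglePeaked.prefers_of_liesBetween {L P : α → α → Prop} [Std.Trichotomous L]
    (hP : SinglePeaked L P) {u m w : α} (h : LiesBetween L u m w) : P m u ∨ P m w := by
  suffices ∀ {u w}, L u m → L m w → P m u ∨ P m w by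
    rcases h with ⟨hu, hw⟩ | ⟨hw, hu⟩
    · exact this hu hw
    · exact (this hw hu).symm
  intro u w hu hw
  obtain ⟨p, -, hp⟩ := hP
  rcases trichotomous_of L p m with hpm | rfl | hmp
  · exact .inr (hp m w (.inl ⟨.inl hpm, hw⟩))
  · exact .inr (hp p w (.inl ⟨.inr rfl, hw⟩))
  · exact .inl (hp m u (.inr ⟨hu, .inl hmp⟩))

theorem StrictMaj.ne {n : ℕ} {P : Fin n → α → α → Prop} {x y : α} (h : StrictMaj P x y) :
    x ≠ y := by
  rintro rfl
  exact lt_irrefl _ h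

theorem majCount_le_majCount {n : ℕ} {P : Fin n → α → α → Prop} {x y x' y' : α}
    (h : ∀ i, P i x y → P i x' y') : majCount P x y ≤ majCount P x' y' :=
  Set.ncard_le_ncard h (Set.toFinite _)

theorem not_strictMaj_and_strictMaj_of_not_worst {n : ℕ} {P : Fin n → α → α → Prop}
    (hP : ∀ i, IsStrictTotalOrder α (P i)) {a b c : α} (h : ∀ i, P i b a ∨ P i b c) :
    ¬ (StrictMaj P a b ∧ StrictMaj P c a) := by
  rintro ⟨hab, hca⟩
  have hac : ∀ i, P i a b → P i a c := by
    intro i hi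
    have := hP i
    rcases h i with hba | hbc
    · exact absurd (trans_of (P i) hi hba) (irrefl_of (P i) a)
    · exact trans_of (P i) hi hbc
  have hba : ∀ i, P i c a → P i b a := by
    intro i hi
    have := hP i
    rcases trichotomous_of (P i) b a with hba | rfl | hab_i
    · exact hba
    · exact absurd rfl hab.ne
    · exact absurd (trans_of (P i) (hac i hab_i) hi) (irrefl_of (P i) a)
  refine lt_irrefl (majCount P b a) ?_
  calc majCount P b a < majCount P a b := hab
    _ ≤ majCount P a c := majCount_le_majCount hac
    _ < majCount P c a := hca
    _ ≤ majCount P b a := majCount_le_majCount hba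

theorem stmt8_general {n : ℕ}
    (L : α → α → Prop) (hL : IsStrictTotalOrder α L)
    (P : Fin n → α → α → Prop) (hP : ∀ i, IsStrictTotalOrder α (P i))
    (hsp : ∀ i, SinglePeaked L (P i)) :
    ∀ x y z : α, ¬ (StrictMaj P x y ∧ StrictMaj P y z ∧ StrictMaj P z x) := by
  rintro x y z ⟨hxy, hyz, hzx⟩
  have := hL
  have median_never_worst {u m w : α} (h : LiesBetween L u m w) : ∀ i, P i m u ∨ P i m w :=
    fun i => (hsp i).prefers_of_liesBetween h
  rcases liesBetween_cases L hxy.ne hyz.ne hzx.ne with h | h | h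
  · exact not_strictMaj_and_strictMaj_of_not_worst hP (median_never_worst h) ⟨hxy, hzx⟩
  · exact not_strictMaj_and_strictMaj_of_not_worst hP (median_never_worst h) ⟨hyz, hxy⟩
  · exact not_strictMaj_and_strictMaj_of_not_worst hP (median_never_worst h) ⟨hzx, hyz⟩

/-- On a single-peaked profile, strict pairwise majority has no 3-cycle. -/
theorem stmt8 [Fintype α] {n : ℕ}
    (L : α → α → Prop) (hL : IsStrictTotalOrder α L)
    (P : Fin n → α → α → Prop) (hP : ∀ i, IsStrictTotalOrder α (P i))
    (hsp : ∀ i, SinglePeaked L (P i)) :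
    ∀ x y z : α, ¬ (StrictMaj P x y ∧ StrictMaj P y z ∧ StrictMaj P z x) :=
  stmt8_general L hL P hP hsp
end

section
/- Let ≽ be a complete binary relation on a finite set 𝒜 with strict part ≻, and suppose there exists a strict linear order P on 𝒜 and a single pair {A, A'} such that ≻ agrees with P on every pair except possibly {A, A'}, where A and A' are adjacent in P. Then ≽ is transitive. -/
variable {α : Type*}

/-!
Off the pair `{A, A'}`, `R` coincides with `P` on distinct elements, and `R` is reflexive by
completeness. Since `A` and `A'` are adjacent in `P`, every third element compares to them in
the same way. So in a chain `x ≽ y ≽ z` of distinct elements, if `{x, y}` or `{y, z}` is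
`{A, A'}`, the other comparison can be transferred to give `x ≻_P z`; and `{x, z} = {A, A'}`
is impossible, as `x ≻_P y ≻_P z` would give `z ≻_P y`.
-/

theorem rel_iff_of_strictPart_iff {P R : α → α → Prop} [Std.Trichotomous P] {x y : α}
    (hne : x ≠ y) (hxy : (R x y ∧ ¬ R y x) ↔ P x y) (hyx : (R y x ∧ ¬ R x y) ↔ P y x) :
    R x y ↔ P x y := by
  refine ⟨fun hR => ?_, fun hP => (hxy.mpr hP).1⟩
  rcases trichotomous_of P x y with hP | rfl | hP
  · exact hP
  · exact absurd rfl hne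
  · exact absurd hR (hyx.mpr hP).2

theorem Set.pair_ne_of_right_notMem {x z a b : α} (hz : z ∉ ({a, b} : Set α)) :
    ({x, z} : Set α) ≠ {a, b} :=
  fun h => hz (h ▸ by simp)

theorem Set.pair_ne_of_left_notMem {x z a b : α} (hz : z ∉ ({a, b} : Set α)) :
    ({z, x} : Set α) ≠ {a, b} := by
  rw [Set.pair_comm]
  exact Set.pair_ne_of_right_notMem hz

namespace Adjacent

variable {P : α → α → Prop} [IsStrictTotalOrder α P] {a b c x y z : α}

theorem rel_left_iff (h : Adjacent P a b) (hcb : c ≠ b) : P a c ↔ P b c := by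
  refine ⟨fun hac => ?_, fun hbc => _root_.trans h.1 hbc⟩
  rcases trichotomous_of P b c with hbc | rfl | hcb'
  · exact hbc
  · exact absurd rfl hcb
  · exact absurd ⟨c, hac, hcb'⟩ h.2

theorem rel_right_iff (h : Adjacent P a b) (hca : c ≠ a) : P c a ↔ P c b := by
  refine ⟨fun hca' => _root_.trans hca' h.1, fun hcb => ?_⟩
  rcases trichotomous_of P c a with hca' | rfl | hac
  · exact hca'
  · exact absurd rfl hca
  · exact absurd ⟨c, hac, hcb⟩ h.2

theorem rel_left_iff_of_pair_eq (h : Adjacent P a b) (hxy : ({x, y} : Set α) = {a, b})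
    (hzx : z ≠ x) (hzy : z ≠ y) : P x z ↔ P y z := by
  rcases Set.pair_eq_pair_iff.mp hxy with ⟨rfl, rfl⟩ | ⟨rfl, rfl⟩
  · exact h.rel_left_iff hzy
  · exact (h.rel_left_iff hzx).symm

theorem rel_right_iff_of_pair_eq (h : Adjacent P a b) (hxy : ({x, y} : Set α) = {a, b})
    (hzx : z ≠ x) (hzy : z ≠ y) : P z x ↔ P z y := by
  rcases Set.pair_eq_pair_iff.mp hxy with ⟨rfl, rfl⟩ | ⟨rfl, rfl⟩
  · exact h.rel_right_iff hzx
  · exact (h.rel_right_iff hzy).symm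

theorem not_between_of_pair_eq (h : Adjacent P a b) (hxz : ({x, z} : Set α) = {a, b})
    (hxy : P x y) (hyz : P y z) : False := by
  have hyx : y ≠ x := (irrefl_of P x <| · ▸ hxy)
  have hyz' : y ≠ z := (irrefl_of P y <| · ▸ hyz)
  exact asymm hyz ((h.rel_left_iff_of_pair_eq hxz hyx hyz').mp hxy)

end Adjacent

theorem stmt15_general (R : α → α → Prop)
    (hcomp : ∀ x y : α, R x y ∨ R y x)
    (P : α → α → Prop) (hP : IsStrictTotalOrder α P)
    (A A' : α) (hadj : Adjacent P A A')
    (hagree : ∀ x y : α, ({x, y} : Set α) ≠ ({A, A'} : Set α) →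
      ((R x y ∧ ¬ R y x) ↔ P x y)) :
    Transitive R := by
  have hRP : ∀ x y, x ≠ y → ({x, y} : Set α) ≠ {A, A'} → (R x y ↔ P x y) := fun x y hne hs =>
    rel_iff_of_strictPart_iff hne (hagree x y hs) (hagree y x (by rwa [Set.pair_comm]))
  intro x y z hxy hyz
  obtain rfl | hxz := eq_or_ne x z
  · exact (hcomp x x).elim id id
  obtain rfl | hxy' := eq_or_ne x y
  · exact hyz
  obtain rfl | hyz' := eq_or_ne y z
  · exact hxy
  by_cases s1 : ({x, y} : Set α) = {A, A'}
  · have hz : z ∉ ({A, A'} : Set α) := s1 ▸ by simp [hxz.symm, hyz'.symm]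
    have hyzP := (hRP y z hyz' (Set.pair_ne_of_right_notMem hz)).mp hyz
    exact (hRP x z hxz (Set.pair_ne_of_right_notMem hz)).mpr
      ((hadj.rel_left_iff_of_pair_eq s1 hxz.symm hyz'.symm).mpr hyzP)
  by_cases s2 : ({y, z} : Set α) = {A, A'}
  · have hx : x ∉ ({A, A'} : Set α) := s2 ▸ by simp [hxy', hxz]
    have hxyP := (hRP x y hxy' (Set.pair_ne_of_left_notMem hx)).mp hxy
    exact (hRP x z hxz (Set.pair_ne_of_left_notMem hx)).mpr
      ((hadj.rel_right_iff_of_pair_eq s2 hxy' hxz).mp hxyP)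
  have hxyP := (hRP x y hxy' s1).mp hxy
  have hyzP := (hRP y z hyz' s2).mp hyz
  by_cases s3 : ({x, z} : Set α) = {A, A'}
  · exact (hadj.not_between_of_pair_eq s3 hxyP hyzP).elim
  · exact (hRP x z hxz s3).mpr (_root_.trans hxyP hyzP)

/-- A complete relation whose strict part agrees with a strict linear order `P`
on every pair except possibly a single pair adjacent in `P` is transitive. -/
theorem stmt15 [Fintype α] (R : α → α → Prop)
    (hcomp : ∀ x y : α, R x y ∨ R y x)
    (P : α → α → Prop) (hP : IsStrictTotalOrder α P)
    (A A' : α) (hadj : Adjacent P A A')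
    (hagree : ∀ x y : α, ({x, y} : Set α) ≠ ({A, A'} : Set α) →
      ((R x y ∧ ¬ R y x) ↔ P x y)) :
    Transitive R :=
  stmt15_general R hcomp P hP A A' hadj hagree
end
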